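/- arXiv:math/0301006 — 3 statements merged into one kernel-verified Lean document; each statement's English description precedes it below -/
import Mathlib

section
/- Let V be a finite-dimensional vector space over ℚ and T ∈ GL(V) an automorphism whose characteristic polynomial is a product of cyclotomic polynomials. Then there exists a linear involution b : V → V (b ∘ b = id) such that b ∘ T ∘ b = T⁻¹. -/
/-!
The `ℚ[X]`-module `V` defined by `T` is a direct sum of cyclic modules `ℚ[X] ⧸ (p ^ e)` with `p`
an irreducible factor of the characteristic polynomial, hence associated to a cyclotomic
polynomial; such `p` divides its own reverse because the inverse of a primitive root of unity is
again one. For any `q ∣ q.reverse` with invertible constant term, the root `x` of `ℚ[X] ⧸ (q)` is a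
unit and `x ↦ x⁻¹` extends to an involutive algebra endomorphism `σ`, which satisfies
`σ (x * a) = x⁻¹ * σ a`. Taking `σ` on each summand gives `b` with `b ^ 2 = 1` and `b T b = T⁻¹`.
-/

open Polynomial

namespace Polynomial

variable {R : Type*}

theorem coeff_zero_ne_zero_of_dvd_reverse [Semiring R] {p : R[X]} (hp : p ≠ 0)
    (h : p ∣ p.reverse) : p.coeff 0 ≠ 0 := by
  intro h0
  have := X_dvd_iff.mp ((X_dvd_iff.mpr h0).trans h)
  rw [coeff_zero_reverse, leadingCoeff_eq_zero] at this
  exact hp this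

theorem reverse_pow [Semiring R] [NoZeroDivisors R] (p : R[X]) (n : ℕ) :
    (p ^ n).reverse = p.reverse ^ n := by
  induction n with
  | zero => simpa using reverse_C (1 : R)
  | succ n ih => rw [pow_succ, reverse_mul_of_domain, ih, pow_succ]

theorem pow_dvd_reverse_pow [CommSemiring R] [NoZeroDivisors R] {p : R[X]}
    (h : p ∣ p.reverse) (n : ℕ) : p ^ n ∣ (p ^ n).reverse := by
  rw [reverse_pow]
  exact pow_dvd_pow_of_dvd h n

theorem Associated.reverse [CommRing R] [IsDomain R] {p q : R[X]} (h : Associated p q) :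
    Associated p.reverse q.reverse := by
  obtain ⟨u, rfl⟩ := h
  obtain ⟨r, -, hr⟩ := Polynomial.isUnit_iff.mp u.isUnit
  refine ⟨u, ?_⟩
  rw [← hr, reverse_mul_of_domain, reverse_C]

theorem cyclotomic_dvd_reverse (n : ℕ) : cyclotomic n ℚ ∣ (cyclotomic n ℚ).reverse := by
  rcases n.eq_zero_or_pos with rfl | hn
  · simp
  have hζ := Complex.isPrimitiveRoot_exp n hn.ne'
  set ζ := Complex.exp (2 * Real.pi * Complex.I / n)
  let : Invertible ζ⁻¹ := invertibleOfNonzero (inv_ne_zero (hζ.ne_zero hn.ne'))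
  rw [cyclotomic_eq_minpoly_rat hζ hn]
  refine minpoly.dvd ℚ ζ ?_
  have := (eval₂_reverse_eq_zero_iff (algebraMap ℚ ℂ) ζ⁻¹ (minpoly ℚ ζ)).mpr ?_
  · simpa [aeval_def] using this
  rw [← aeval_def, ← cyclotomic_eq_minpoly_rat hζ hn, aeval_def, eval₂_eq_eval_map,
    map_cyclotomic]
  exact hζ.inv.isRoot_cyclotomic hn

theorem dvd_reverse_of_dvd_prod_cyclotomic {s : Multiset ℕ} (hs : ∀ n ∈ s, 0 < n)
    {p : ℚ[X]} (hp : Irreducible p) (hdvd : p ∣ (s.map fun n => cyclotomic n ℚ).prod) :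
    p ∣ p.reverse := by
  obtain ⟨n, hn, hpn⟩ := hp.prime.exists_mem_multiset_map_dvd hdvd
  have hassoc := hp.associated_of_dvd (cyclotomic.irreducible_rat (hs n hn)) hpn
  exact hassoc.dvd.trans ((cyclotomic_dvd_reverse n).trans hassoc.symm.reverse.dvd)

end Polynomial

namespace AdjoinRoot

variable {R : Type*} [CommRing R] {q : R[X]}

theorem isUnit_root (hq : IsUnit (q.coeff 0)) : IsUnit (root q) := by
  refine isUnit_of_dvd_unit ⟨-mk q q.divX, ?_⟩ (hq.map (of q))
  have := congrArg (mk q) (X_mul_divX_add q)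
  rw [map_add, map_mul, mk_X, mk_C, mk_self] at this
  linear_combination this

theorem exists_involutive_algHom_root_inv (hq : IsUnit (q.coeff 0)) (hrev : q ∣ q.reverse) :
    ∃ σ : AdjoinRoot q →ₐ[R] AdjoinRoot q, Function.Involutive σ ∧ σ (root q) * root q = 1 := by
  let : Invertible (root q) := (isUnit_root hq).invertible
  -- `⅟x` is a root of `q` because `x` is a root of `q.reverse`
  have hinv : aeval (⅟(root q)) q = 0 := by
    obtain ⟨r, hr⟩ := hrev
    rw [aeval_def, ← eval₂_reverse_eq_zero_iff, invOf_invOf, hr, eval₂_mul, ← aeval_def,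
      aeval_eq, mk_self, zero_mul]
  let σ := liftAlgHom q (Algebra.ofId R _) (⅟(root q)) hinv
  have hσ : σ (root q) * root q = 1 := by
    rw [show σ (root q) = ⅟(root q) from liftAlgHom_root _ _ _ _, invOf_mul_self]
  refine ⟨σ, fun a => ?_, hσ⟩
  suffices σ.comp σ = AlgHom.id R _ from AlgHom.congr_fun this a
  refine algHom_ext (left_inv_eq_right_inv ?_ hσ)
  rw [AlgHom.comp_apply, ← map_mul, hσ, map_one]

end AdjoinRoot

section ReversingInvolution

variable {K M N : Type*} [CommRing K] [AddCommGroup M] [Module K M] [Module K[X] M]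
  [AddCommGroup N] [Module K N] [Module K[X] N]

/-- Writing `T` for the action of `X`, this says `B ^ 2 = 1` and `B T B = T⁻¹`. -/
def IsReversingInvolution (B : M →ₗ[K] M) : Prop :=
  Function.Involutive B ∧ ∀ m, (X : K[X]) • B ((X : K[X]) • B m) = m

theorem IsReversingInvolution.conj [IsScalarTower K K[X] M] [IsScalarTower K K[X] N]
    {B : N →ₗ[K] N} (hB : IsReversingInvolution B) (e : M ≃ₗ[K[X]] N) :
    IsReversingInvolution
      ((e.restrictScalars K).symm.toLinearMap ∘ₗ B ∘ₗ e.restrictScalars K) := by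
  refine ⟨fun m => ?_, fun m => ?_⟩
  · simp [hB.1 (e m)]
  · apply e.injective
    simp [hB.2 (e m)]

theorem exists_isReversingInvolution_directSum {ι : Type*} {β : ι → Type*}
    [∀ i, AddCommGroup (β i)] [∀ i, Module K (β i)] [∀ i, Module K[X] (β i)]
    (h : ∀ i, ∃ B : β i →ₗ[K] β i, IsReversingInvolution B) :
    ∃ B : DirectSum ι β →ₗ[K] DirectSum ι β, IsReversingInvolution B := by
  choose B hB using h
  refine ⟨DirectSum.lmap B, fun d => DFinsupp.ext fun i => ?_, fun d => DFinsupp.ext fun i => ?_⟩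
  · simp only [DirectSum.lmap_apply]
    exact (hB i).1 (d i)
  · simp only [DirectSum.lmap_apply, DirectSum.smul_apply]
    exact (hB i).2 (d i)

theorem exists_isReversingInvolution_quotient_span {q : K[X]} (hq : IsUnit (q.coeff 0))
    (hrev : q ∣ q.reverse) :
    ∃ B : (K[X] ⧸ K[X] ∙ q) →ₗ[K] K[X] ⧸ K[X] ∙ q, IsReversingInvolution B := by
  obtain ⟨σ, hσσ, hσ⟩ := AdjoinRoot.exists_involutive_algHom_root_inv hq hrev
  refine ⟨σ.toLinearMap, hσσ, ?_⟩
  -- `K[X] ⧸ K[X] ∙ q` is `AdjoinRoot q` by definition, `X` acting by multiplication by the root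
  change ∀ a : AdjoinRoot q, AdjoinRoot.root q * σ (AdjoinRoot.root q * σ a) = a
  intro a
  rw [map_mul, hσσ, ← mul_assoc, mul_comm (AdjoinRoot.root q), hσ, one_mul]

theorem Module.AEval'.exists_involution_of_isReversingInvolution {V : Type*} [AddCommGroup V]
    [Module K V] {f : V →ₗ[K] V} {B : AEval' f →ₗ[K] AEval' f} (hB : IsReversingInvolution B) :
    ∃ b : V →ₗ[K] V, b ∘ₗ b = LinearMap.id ∧ f ∘ₗ b ∘ₗ f ∘ₗ b = LinearMap.id := by
  refine ⟨(AEval'.of f).symm.toLinearMap ∘ₗ B ∘ₗ (AEval'.of f).toLinearMap, ?_, ?_⟩ <;> ext v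
  · simp [hB.1 _]
  · simp only [LinearMap.comp_apply, LinearEquiv.coe_coe, LinearMap.id_apply]
    rw [← AEval'.of_symm_X_smul, ← AEval'.X_smul_of, LinearEquiv.apply_symm_apply, hB.2,
      LinearEquiv.symm_apply_apply]

end ReversingInvolution

theorem dvd_of_mem_annihilator_directSum {R ι M : Type*} [CommRing R] [AddCommGroup M]
    [Module R M] {q : ι → R} (e : M ≃ₗ[R] DirectSum ι fun i => R ⧸ R ∙ q i) {a : R}
    (ha : a ∈ Module.annihilator R M) (i : ι) : q i ∣ a := by
  simp_rw [e.annihilator_eq, DirectSum, Module.annihilator_dfinsupp, Submodule.mem_iInf] at ha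
  rw [← Ideal.mem_span_singleton, ← Ideal.annihilator_quotient (I := Ideal.span {q i})]
  exact ha i

theorem LinearMap.charpoly_mem_annihilator {K V : Type*} [Field K] [AddCommGroup V] [Module K V]
    [FiniteDimensional K V] (f : V →ₗ[K] V) :
    f.charpoly ∈ Module.annihilator K[X] (Module.AEval' f) := by
  rw [Module.AEval.annihilator_eq_ker_aeval, RingHom.mem_ker, f.aeval_self_charpoly]

theorem LinearMap.exists_involution_of_forall_dvd_reverse {K V : Type*} [Field K]
    [AddCommGroup V] [Module K V] [FiniteDimensional K V] (f : V →ₗ[K] V)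
    (hf : ∀ p : K[X], Irreducible p → p ∣ f.charpoly → p ∣ p.reverse) :
    ∃ b : V →ₗ[K] V, b ∘ₗ b = LinearMap.id ∧ f ∘ₗ b ∘ₗ f ∘ₗ b = LinearMap.id := by
  obtain ⟨ι, _, p, hp, e, ⟨E⟩⟩ :=
    Module.equiv_directSum_of_isTorsion (Module.AEval.isTorsion_of_finiteDimensional K V f)
  have hrev (i : ι) : p i ^ e i ∣ (p i ^ e i).reverse := by
    rcases eq_or_ne (e i) 0 with he | he
    · simp [he]
    · refine pow_dvd_reverse_pow (hf _ (hp i) ((dvd_pow_self _ he).trans ?_)) _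
      exact dvd_of_mem_annihilator_directSum E f.charpoly_mem_annihilator i
  have hcoeff (i : ι) : IsUnit ((p i ^ e i).coeff 0) :=
    (coeff_zero_ne_zero_of_dvd_reverse (pow_ne_zero _ (hp i).ne_zero) (hrev i)).isUnit
  obtain ⟨B, hB⟩ := exists_isReversingInvolution_directSum fun i =>
    exists_isReversingInvolution_quotient_span (hcoeff i) (hrev i)
  exact Module.AEval'.exists_involution_of_isReversingInvolution (hB.conj E)

theorem stmt_7 {V : Type*} [AddCommGroup V] [Module ℚ V] [FiniteDimensional ℚ V]
    (T : V ≃ₗ[ℚ] V)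
    (h : ∃ s : Multiset ℕ, (∀ n ∈ s, 0 < n) ∧
      LinearMap.charpoly (T : V →ₗ[ℚ] V) = (s.map fun n => cyclotomic n ℚ).prod) :
    ∃ b : V →ₗ[ℚ] V, b ∘ₗ b = LinearMap.id ∧
      b ∘ₗ (T : V →ₗ[ℚ] V) ∘ₗ b = (T.symm : V →ₗ[ℚ] V) := by
  obtain ⟨s, hs, hchar⟩ := h
  obtain ⟨b, hbb, hTb⟩ := (T : V →ₗ[ℚ] V).exists_involution_of_forall_dvd_reverse
    fun p hp hdvd => dvd_reverse_of_dvd_prod_cyclotomic hs hp (hchar ▸ hdvd)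
  refine ⟨b, hbb, ?_⟩
  calc b ∘ₗ (T : V →ₗ[ℚ] V) ∘ₗ b
      = (T.symm : V →ₗ[ℚ] V) ∘ₗ (T : V →ₗ[ℚ] V) ∘ₗ b ∘ₗ (T : V →ₗ[ℚ] V) ∘ₗ b := by
        ext v; simp
    _ = T.symm := by rw [hTb, LinearMap.comp_id]
end

section
/- Let S be the block upper-triangular matrix over ℚ with diagonal blocks Id_{μ₊}, Id_{μ₀}, Id_{μ₋}, (1,2)-block A, (2,3)-block B, and (1,3)-block G where A·B = 2·G, and let C be the same matrix with the middle row of blocks negated (diagonal block −Id_{μ₀}, (2,3)-block −B). Define T = (Sᵀ)⁻¹ · S. Then T·C equals the block lower-triangular matrix with diagonal blocks Id_{μ₊}, −Id_{μ₀}, Id_{μ₋}, (2,1)-block −Aᵀ, (3,1)-block Gᵀ, and (3,2)-block Bᵀ. -/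
open Matrix

/-
Write M for the claimed matrix. Rather than inverting Sᵀ, compare S C with Sᵀ M blockwise: the
only blocks that differ a priori are 2G - AB and its transpose, which vanish. Since S is
unitriangular, Sᵀ is invertible and T C = (Sᵀ)⁻¹ S C = M.
-/

namespace Matrix

variable {R : Type*} [CommRing R] {p z m : Type*} [Fintype p] [Fintype z] [Fintype m]
  [DecidableEq p] [DecidableEq z] [DecidableEq m]
  (A : Matrix p z R) (B : Matrix z m R) (G : Matrix p m R)

theorem det_fromBlocks_one_fromCols_zero_fromBlocks_one :
    (fromBlocks 1 (fromCols A G) 0 (fromBlocks 1 B 0 1) : Matrix (p ⊕ z ⊕ m) (p ⊕ z ⊕ m) R).det = 1 := by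
  simp [det_fromBlocks_zero₂₁]

theorem fromBlocks_mul_eq_transpose_mul (hG : A * B = 2 • G) :
    (fromBlocks 1 (fromCols A G) 0 (fromBlocks 1 B 0 1) : Matrix (p ⊕ z ⊕ m) (p ⊕ z ⊕ m) R) *
        fromBlocks 1 (fromCols A G) 0 (fromBlocks (-1) (-B) 0 1) =
      (fromBlocks 1 (fromCols A G) 0 (fromBlocks 1 B 0 1))ᵀ *
        fromBlocks 1 0 (fromRows (-Aᵀ) Gᵀ) (fromBlocks (-1) 0 Bᵀ 1) := by
  have hBA : Bᵀ * Aᵀ = 2 • Gᵀ := by rw [← transpose_mul, hG, transpose_smul]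
  simp only [fromBlocks_transpose, transpose_fromCols, transpose_one, transpose_zero,
    fromBlocks_multiply, fromCols_mul_fromBlocks, fromBlocks_mul_fromRows, Matrix.mul_one,
    Matrix.one_mul, Matrix.mul_zero, Matrix.zero_mul, Matrix.mul_neg, hG, hBA, add_zero, zero_add,
    neg_add_cancel, neg_zero]
  congr 1
  · ext i (j | j) <;> simp [two_smul]
  · ext (i | i) j <;> simp [two_smul]

end Matrix

theorem stmt_11 (μp μ0 μm : ℕ)
    (A : Matrix (Fin μp) (Fin μ0) ℚ) (B : Matrix (Fin μ0) (Fin μm) ℚ)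
    (G : Matrix (Fin μp) (Fin μm) ℚ) (hG : A * B = 2 • G) :
    let S := fromBlocks 1 (fromCols A G) 0 (fromBlocks 1 B 0 1)
    let C := fromBlocks 1 (fromCols A G) 0 (fromBlocks (-1) (-B) 0 1)
    let T := (Sᵀ)⁻¹ * S
    T * C = fromBlocks 1 0 (fromRows (-Aᵀ) Gᵀ) (fromBlocks (-1) 0 Bᵀ 1) := by
  intro S C T
  have : Invertible Sᵀ := invertibleOfIsUnitDet _ <| by
    rw [det_transpose, det_fromBlocks_one_fromCols_zero_fromBlocks_one]
    exact isUnit_one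
  rw [Matrix.mul_assoc, inv_mul_eq_iff_eq_mul_of_invertible]
  exact fromBlocks_mul_eq_transpose_mul A B G hG
end

section
/- With S, C, T as above (S block upper-triangular unipotent with blocks A, B, G satisfying A·B = 2·G, C the same with middle block row negated, T = (Sᵀ)⁻¹S), the matrix T·C is an involution: (T·C)² = Id. Equivalently, C·T·C = T⁻¹. -/
/-!
With `K = diag(1, -1, 1)` one has `C = K S`, and `A B = 2 G` says exactly that `C` is an
involution, i.e. `S K S = K`. This turns `T C = (Sᵀ)⁻¹ S K S` into `(Sᵀ)⁻¹ K = K Sᵀ = (S K)ᵀ`,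
and `(S K)² = 1` follows from `S K S = K` once more. Finally `(T C)² = 1` reads `T (C T C) = 1`.
-/

open Matrix

theorem mul_mul_eq_of_mul_self_eq_one {M : Type*} [Monoid M] {s k : M} (hk : k * k = 1)
    (h : k * s * (k * s) = 1) : s * k * s = k := by
  calc s * k * s = k * k * s * k * s := by rw [hk, one_mul]
    _ = k * (k * s * (k * s)) := by simp only [mul_assoc]
    _ = k := by rw [h, mul_one]

namespace Matrix

section Monodromy

variable {n R : Type*} [Fintype n] [DecidableEq n] [CommRing R]

noncomputable def monodromy (S : Matrix n n R) : Matrix n n R := (Sᵀ)⁻¹ * S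

variable {S K : Matrix n n R}

theorem monodromy_mul_eq_transpose (hK : Kᵀ = K) (hKK : K * K = 1)
    (hC : K * S * (K * S) = 1) : monodromy S * (K * S) = (S * K)ᵀ := by
  have hinv : (Sᵀ)⁻¹ = K * Sᵀ * K := by
    refine inv_eq_right_inv ?_
    calc Sᵀ * (K * Sᵀ * K) = (K * S * (K * S))ᵀ := by
          simp only [transpose_mul, hK, Matrix.mul_assoc]
      _ = 1 := by rw [hC, transpose_one]
  calc monodromy S * (K * S) = K * Sᵀ * K * (S * K * S) := by
        rw [monodromy, hinv]; simp only [Matrix.mul_assoc]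
    _ = (S * K)ᵀ := by
        rw [mul_mul_eq_of_mul_self_eq_one hKK hC, Matrix.mul_assoc, hKK, Matrix.mul_one,
          transpose_mul, hK]

theorem monodromy_mul_mul_self_eq_one (hK : Kᵀ = K) (hKK : K * K = 1)
    (hC : K * S * (K * S) = 1) :
    monodromy S * (K * S) * (monodromy S * (K * S)) = 1 := by
  rw [monodromy_mul_eq_transpose hK hKK hC, ← transpose_mul]
  calc (S * K * (S * K))ᵀ = (S * K * S * K)ᵀ := by simp only [Matrix.mul_assoc]
    _ = 1 := by rw [mul_mul_eq_of_mul_self_eq_one hKK hC, hKK, transpose_one]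

end Monodromy

section Blocks

variable {p z m R : Type*} [DecidableEq p] [DecidableEq z] [DecidableEq m] [CommRing R]

def middleSign (p z m R : Type*) [DecidableEq p] [DecidableEq z] [DecidableEq m] [CommRing R] :
    Matrix (p ⊕ z ⊕ m) (p ⊕ z ⊕ m) R :=
  fromBlocks 1 0 0 (fromBlocks (-1) 0 0 1)

theorem middleSign_transpose : (middleSign p z m R)ᵀ = middleSign p z m R := by
  simp [middleSign, fromBlocks_transpose]

variable [Fintype p] [Fintype z] [Fintype m]

theorem middleSign_mul_self : middleSign p z m R * middleSign p z m R = 1 := by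
  simp [middleSign, fromBlocks_multiply, ← fromBlocks_one]

variable (A : Matrix p z R) (B : Matrix z m R) (G : Matrix p m R)

theorem middleSign_mul_fromBlocks :
    middleSign p z m R * fromBlocks 1 (fromCols A G) 0 (fromBlocks 1 B 0 1) =
      fromBlocks 1 (fromCols A G) 0 (fromBlocks (-1) (-B) 0 1) := by
  simp [middleSign, fromBlocks_multiply]

theorem middleSign_mul_fromBlocks_mul_self (hG : A * B = 2 • G) :
    let S := fromBlocks 1 (fromCols A G) 0 (fromBlocks 1 B 0 1)
    middleSign p z m R * S * (middleSign p z m R * S) = 1 := by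
  simp only [middleSign_mul_fromBlocks, fromBlocks_multiply, fromCols_mul_fromBlocks,
    ← fromBlocks_one, fromBlocks_inj, mul_one, mul_neg, neg_neg, neg_zero, Matrix.one_mul,
    Matrix.mul_one, Matrix.mul_zero, Matrix.zero_mul, Matrix.mul_neg, Matrix.neg_mul,
    add_neg_cancel, add_zero, zero_add, and_self, and_true, true_and]
  rw [hG, two_smul]
  ext i (j | j) <;> simp

end Blocks

end Matrix

theorem stmt_12 (μp μ0 μm : ℕ)
    (A : Matrix (Fin μp) (Fin μ0) ℚ) (B : Matrix (Fin μ0) (Fin μm) ℚ)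
    (G : Matrix (Fin μp) (Fin μm) ℚ) (hG : A * B = 2 • G) :
    let S := fromBlocks 1 (fromCols A G) 0 (fromBlocks 1 B 0 1)
    let C := fromBlocks 1 (fromCols A G) 0 (fromBlocks (-1) (-B) 0 1)
    let T := (Sᵀ)⁻¹ * S
    (T * C) * (T * C) = 1 ∧ C * T * C = T⁻¹ := by
  intro S C T
  have hC : C = middleSign _ _ _ ℚ * S := (middleSign_mul_fromBlocks A B G).symm
  have hTC : T * C * (T * C) = 1 := by
    rw [hC]
    exact monodromy_mul_mul_self_eq_one middleSign_transpose middleSign_mul_self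
      (middleSign_mul_fromBlocks_mul_self A B G hG)
  refine ⟨hTC, (inv_eq_right_inv ?_).symm⟩
  simpa only [Matrix.mul_assoc] using hTC
end
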